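/- arXiv:2105.04793 — 3 statements merged into one kernel-verified Lean document; each statement's English description precedes it below -/
import Mathlib

section
/- Let f : 2^Ω → ℝ be a normalized (f(∅)=0), monotone, submodular set function on a finite ground set Ω with curvature ν = 1 - min_{x∈Ω} (f(Ω) - f(Ω\{x}))/f(x) (assuming f(x) > 0 for all x). Then for every subset S ⊆ Ω, f(S) ≥ (1-ν) · ∑_{a∈S} f({a}). -/
/-! Adding the elements of `S` one at a time, submodularity bounds each marginal gain
`f (insert a T) - f T` from below by the marginal gain `f univ - f (univ.erase a)` of `a` on top of
everything else, which by definition of the curvature is at least `(1 - ν) * f {a}`. -/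

open Finset

theorem sum_sub_erase_univ_le {Ω : Type*} [Fintype Ω] [DecidableEq Ω]
    (f : Finset Ω → ℝ) (hnorm : f ∅ = 0)
    (hsub : ∀ A B : Finset Ω, A ⊆ B → ∀ x ∉ B,
      f (insert x A) - f A ≥ f (insert x B) - f B)
    (S : Finset Ω) :
    ∑ a ∈ S, (f univ - f (univ.erase a)) ≤ f S := by
  induction S using Finset.induction_on with
  | empty => simp [hnorm]
  | @insert a S haS ih =>
    have hgain : f univ - f (univ.erase a) ≤ f (insert a S) - f S := by
      have hS : S ⊆ univ.erase a := fun x hx =>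
        mem_erase.2 ⟨ne_of_mem_of_not_mem hx haS, mem_univ x⟩
      have h := hsub S (univ.erase a) hS a (notMem_erase a univ)
      rwa [insert_erase (mem_univ a)] at h
    rw [sum_insert haS]
    linarith

theorem stmt0_general {Ω : Type*} [Fintype Ω] [DecidableEq Ω] [Nonempty Ω]
    (f : Finset Ω → ℝ)
    (hnorm : f ∅ = 0)
    (hsub : ∀ A B : Finset Ω, A ⊆ B → ∀ x ∉ B,
      f (insert x A) - f A ≥ f (insert x B) - f B)
    (hpos : ∀ x : Ω, 0 < f {x})
    (ν : ℝ)
    (hν : ν = 1 - (univ : Finset Ω).inf' univ_nonempty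
      (fun x => (f univ - f (univ \ {x})) / f {x}))
    (S : Finset Ω) :
    f S ≥ (1 - ν) * ∑ a ∈ S, f {a} := by
  have hcurv : ∀ a, (1 - ν) * f {a} ≤ f univ - f (univ.erase a) := by
    intro a
    rw [hν, sub_sub_cancel, ← le_div_iff₀ (hpos a), ← sdiff_singleton_eq_erase]
    exact inf'_le _ (mem_univ a)
  calc (1 - ν) * ∑ a ∈ S, f {a} = ∑ a ∈ S, (1 - ν) * f {a} := mul_sum _ _ _
    _ ≤ ∑ a ∈ S, (f univ - f (univ.erase a)) := sum_le_sum fun a _ => hcurv a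
    _ ≤ f S := sum_sub_erase_univ_le f hnorm hsub S

theorem stmt0 {Ω : Type*} [Fintype Ω] [DecidableEq Ω] [Nonempty Ω]
    (f : Finset Ω → ℝ)
    (hnorm : f ∅ = 0)
    (hmono : ∀ A B : Finset Ω, A ⊆ B → f A ≤ f B)
    (hsub : ∀ A B : Finset Ω, A ⊆ B → ∀ x ∉ B,
      f (insert x A) - f A ≥ f (insert x B) - f B)
    (hpos : ∀ x : Ω, 0 < f {x})
    (ν : ℝ)
    (hν : ν = 1 - (univ : Finset Ω).inf' univ_nonempty
      (fun x => (f univ - f (univ \ {x})) / f {x}))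
    (S : Finset Ω) :
    f S ≥ (1 - ν) * ∑ a ∈ S, f {a} :=
  stmt0_general f hnorm hsub hpos ν hν S
end

section
/- Let f : 2^Ω → ℝ be monotone and submodular with curvature ν ∈ [0,1], and suppose elements of a set A = {a₁,...,aₖ} satisfy f({aᵢ}) ≥ f({bᵢ}) for some injectively chosen elements b₁,...,bₖ of a set B. Then ∑_{i} f({aᵢ}) ≥ f({b₁,...,bₖ}) and hence f(A) ≥ (1-ν) f({b₁,...,bₖ}). -/
/-!
Submodularity with `f ∅ = 0` makes `f` subadditive, so `f B ≤ ∑ f {bᵢ} ≤ ∑ f {aᵢ}`. Conversely,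
summing the submodular inequality along a chain shows that `f A` dominates the sum of the last
marginals `f Ω - f (Ω \ {a})` over `a ∈ A`, and by the definition of curvature each of these is at
least `(1 - ν) f {a}`.
-/

open Finset

section Submodular

variable {Ω : Type*} [DecidableEq Ω] (f : Finset Ω → ℝ)

theorem le_sum_singleton_of_submodular (hnorm : f ∅ = 0)
    (hsub : ∀ A B : Finset Ω, f A + f B ≥ f (A ∪ B) + f (A ∩ B)) (S : Finset Ω) :
    f S ≤ ∑ x ∈ S, f {x} := by
  induction S using Finset.induction_on with
  | empty => simp [hnorm]
  | @insert x S hx ih =>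
    have h := hsub {x} S
    rw [← insert_eq, singleton_inter_of_notMem hx, hnorm] at h
    rw [sum_insert hx]
    linarith

variable [Fintype Ω]

theorem sum_marginal_le_of_submodular (hnorm : f ∅ = 0)
    (hsub : ∀ A B : Finset Ω, f A + f B ≥ f (A ∪ B) + f (A ∩ B)) (S : Finset Ω) :
    ∑ x ∈ S, (f univ - f (univ \ {x})) ≤ f S := by
  induction S using Finset.induction_on with
  | empty => simp [hnorm]
  | @insert x S hx ih =>
    have h := hsub (insert x S) (univ \ {x})
    have hunion : insert x S ∪ univ \ {x} = univ :=
      eq_univ_of_forall fun y => by by_cases hy : y = x <;> simp [hy]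
    have hinter : insert x S ∩ (univ \ {x}) = S := by
      ext y
      by_cases hy : y = x <;> simp [hy, hx]
    rw [hunion, hinter] at h
    rw [sum_insert hx]
    linarith

variable [Nonempty Ω]

theorem inf'_marginal_div_nonneg (hmono : ∀ A B : Finset Ω, A ⊆ B → f A ≤ f B)
    (hpos : ∀ x : Ω, 0 < f {x}) :
    0 ≤ univ.inf' univ_nonempty (fun x => (f univ - f (univ \ {x})) / f {x}) :=
  le_inf' _ _ fun x _ =>
    div_nonneg (sub_nonneg.mpr (hmono _ _ sdiff_subset)) (hpos x).le

theorem inf'_marginal_div_mul_sum_singleton_le (hnorm : f ∅ = 0)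
    (hsub : ∀ A B : Finset Ω, f A + f B ≥ f (A ∪ B) + f (A ∩ B))
    (hpos : ∀ x : Ω, 0 < f {x}) (S : Finset Ω) :
    univ.inf' univ_nonempty (fun x => (f univ - f (univ \ {x})) / f {x}) * ∑ x ∈ S, f {x}
      ≤ f S := by
  rw [mul_sum]
  refine le_trans (sum_le_sum fun x _ => ?_) (sum_marginal_le_of_submodular f hnorm hsub S)
  exact (le_div_iff₀ (hpos x)).mp (inf'_le _ (mem_univ x))

end Submodular

theorem stmt3_general {Ω : Type*} [Fintype Ω] [DecidableEq Ω] [Nonempty Ω]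
    (f : Finset Ω → ℝ)
    (hnorm : f ∅ = 0)
    (hmono : ∀ A B : Finset Ω, A ⊆ B → f A ≤ f B)
    (hsub : ∀ A B : Finset Ω, f A + f B ≥ f (A ∪ B) + f (A ∩ B))
    (hpos : ∀ x : Ω, 0 < f {x})
    (ν : ℝ)
    (hν : ν = 1 - (univ : Finset Ω).inf' univ_nonempty
      (fun x => (f univ - f (univ \ {x})) / f {x}))
    (k : ℕ) (a b : Fin k → Ω)
    (ha : Function.Injective a)
    (hab : ∀ i, f {a i} ≥ f {b i}) :
    (∑ i, f {a i}) ≥ f (Finset.image b Finset.univ) ∧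
    f (Finset.image a Finset.univ) ≥ (1 - ν) * f (Finset.image b Finset.univ) := by
  have hsum : f (image b univ) ≤ ∑ i, f {a i} :=
    calc f (image b univ) ≤ ∑ x ∈ image b univ, f {x} :=
          le_sum_singleton_of_submodular f hnorm hsub _
      _ ≤ ∑ i, f {b i} := sum_image_le_of_nonneg fun x _ => (hpos x).le
      _ ≤ ∑ i, f {a i} := sum_le_sum fun i _ => hab i
  refine ⟨hsum, ?_⟩
  subst hν
  rw [sub_sub_cancel]
  calc _ ≤ univ.inf' univ_nonempty (fun x => (f univ - f (univ \ {x})) / f {x})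
          * ∑ i, f {a i} :=
        mul_le_mul_of_nonneg_left hsum (inf'_marginal_div_nonneg f hmono hpos)
    _ = univ.inf' univ_nonempty (fun x => (f univ - f (univ \ {x})) / f {x})
          * ∑ x ∈ image a univ, f {x} := by
        rw [sum_image fun i _ j _ h => ha h]
    _ ≤ f (image a univ) := inf'_marginal_div_mul_sum_singleton_le f hnorm hsub hpos _

theorem stmt3 {Ω : Type*} [Fintype Ω] [DecidableEq Ω] [Nonempty Ω]
    (f : Finset Ω → ℝ)
    (hnorm : f ∅ = 0)
    (hmono : ∀ A B : Finset Ω, A ⊆ B → f A ≤ f B)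
    (hsub : ∀ A B : Finset Ω, f A + f B ≥ f (A ∪ B) + f (A ∩ B))
    (hpos : ∀ x : Ω, 0 < f {x})
    (ν : ℝ)
    (hν : ν = 1 - (univ : Finset Ω).inf' univ_nonempty
      (fun x => (f univ - f (univ \ {x})) / f {x}))
    (k : ℕ) (a b : Fin k → Ω)
    (ha : Function.Injective a) (hb : Function.Injective b)
    (hab : ∀ i, f {a i} ≥ f {b i}) :
    (∑ i, f {a i}) ≥ f (Finset.image b Finset.univ) ∧
    f (Finset.image a Finset.univ) ≥ (1 - ν) * f (Finset.image b Finset.univ) :=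
  stmt3_general f hnorm hmono hsub hpos ν hν k a b ha hab
end

section
/- Let f be normalized, monotone, submodular with curvature ν, and let A, A* be two bases of a matroid (Ω, I) with π : A → A* a bijection fixing A ∩ A* pointwise and satisfying f({a}) ≥ f({π(a)}) for all a ∈ A. Then for every subset R ⊆ A, f(R) ≥ (1-ν) · f(π(R)), where π(R) = {π(a) : a ∈ R}. -/
/-!
Submodularity gives two estimates for every `S`: subadditivity `f S ≤ ∑ x ∈ S, f {x}`, and the
lower bound `∑ x ∈ S, (f univ - f (univ \ {x})) ≤ f S` by the marginals at the top of the lattice.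
The curvature bounds each such marginal below by `(1 - ν) f {x}`. Chaining these
along `π`, which is injective on `R` and does not increase singleton values,
`(1 - ν) f (π R) ≤ (1 - ν) ∑ f {π a} ≤ (1 - ν) ∑ f {a} ≤ ∑ (f univ - f (univ \ {a})) ≤ f R`.
-/

open Finset

section SetFunction

variable {Ω : Type*} [DecidableEq Ω]

def IsSubmodular (f : Finset Ω → ℝ) : Prop :=
  ∀ A B : Finset Ω, f (A ∪ B) + f (A ∩ B) ≤ f A + f B

namespace IsSubmodular

variable {f : Finset Ω → ℝ}

theorem le_sum_singleton (hf : IsSubmodular f) (h0 : f ∅ = 0) (S : Finset Ω) :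
    f S ≤ ∑ x ∈ S, f {x} := by
  induction S using Finset.induction_on with
  | empty => simp [h0]
  | insert a S ha ih =>
    have h := hf {a} S
    rw [← insert_eq, singleton_inter_of_notMem ha, h0] at h
    rw [sum_insert ha]
    linarith

theorem sum_marginal_univ_le [Fintype Ω] (hf : IsSubmodular f) (h0 : f ∅ = 0)
    (S : Finset Ω) : ∑ x ∈ S, (f univ - f (univ \ {x})) ≤ f S := by
  induction S using Finset.induction_on with
  | empty => simp [h0]
  | insert a S ha ih =>
    have h := hf (univ \ {a}) (insert a S)
    have hunion : (univ \ {a}) ∪ insert a S = univ := by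
      ext x; by_cases hx : x = a <;> simp [hx]
    have hinter : (univ \ {a}) ∩ insert a S = S := by
      ext x; by_cases hx : x = a <;> simp [hx, ha]
    rw [hunion, hinter] at h
    rw [sum_insert ha]
    linarith

end IsSubmodular

noncomputable def curvature [Fintype Ω] [Nonempty Ω] (f : Finset Ω → ℝ) : ℝ :=
  1 - univ.inf' univ_nonempty (fun x => (f univ - f (univ \ {x})) / f {x})

section Curvature

variable [Fintype Ω] [Nonempty Ω] {f : Finset Ω → ℝ}

theorem one_sub_curvature_nonneg (hmono : Monotone f) (hpos : ∀ x, 0 < f {x}) :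
    0 ≤ 1 - curvature f := by
  rw [curvature, sub_sub_cancel]
  refine le_inf' _ _ fun x _ => div_nonneg ?_ (hpos x).le
  exact sub_nonneg.mpr (hmono sdiff_subset)

theorem one_sub_curvature_mul_le (hpos : ∀ x, 0 < f {x}) (x : Ω) :
    (1 - curvature f) * f {x} ≤ f univ - f (univ \ {x}) := by
  rw [curvature, sub_sub_cancel, ← le_div_iff₀ (hpos x)]
  exact inf'_le _ (mem_univ x)

theorem one_sub_curvature_mul_image_le (hsub : IsSubmodular f) (h0 : f ∅ = 0)
    (hmono : Monotone f) (hpos : ∀ x, 0 < f {x}) {π : Ω → Ω} {R : Finset Ω}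
    (hinj : Set.InjOn π R) (hval : ∀ a ∈ R, f {π a} ≤ f {a}) :
    (1 - curvature f) * f (R.image π) ≤ f R := by
  have hc := one_sub_curvature_nonneg hmono hpos
  calc (1 - curvature f) * f (R.image π)
      ≤ (1 - curvature f) * ∑ y ∈ R.image π, f {y} :=
        mul_le_mul_of_nonneg_left (hsub.le_sum_singleton h0 _) hc
    _ = ∑ a ∈ R, (1 - curvature f) * f {π a} := by rw [sum_image hinj, mul_sum]
    _ ≤ ∑ a ∈ R, (1 - curvature f) * f {a} :=
        sum_le_sum fun a ha => mul_le_mul_of_nonneg_left (hval a ha) hc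
    _ ≤ ∑ a ∈ R, (f univ - f (univ \ {a})) :=
        sum_le_sum fun a _ => one_sub_curvature_mul_le hpos a
    _ ≤ f R := hsub.sum_marginal_univ_le h0 R

end Curvature

end SetFunction

theorem stmt6_general {Ω : Type*} [Fintype Ω] [DecidableEq Ω] [Nonempty Ω]
    (f : Finset Ω → ℝ)
    (hnorm : f ∅ = 0)
    (hmono : ∀ A B : Finset Ω, A ⊆ B → f A ≤ f B)
    (hsub : ∀ A B : Finset Ω, f A + f B ≥ f (A ∪ B) + f (A ∩ B))
    (hpos : ∀ x : Ω, 0 < f {x})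
    (ν : ℝ)
    (hν : ν = 1 - (univ : Finset Ω).inf' univ_nonempty
      (fun x => (f univ - f (univ \ {x})) / f {x}))
    (A Astar : Finset Ω)
    (π : Ω → Ω)
    (hbij : Set.BijOn π (A : Set Ω) (Astar : Set Ω))
    (hval : ∀ a ∈ A, f {a} ≥ f {π a})
    (R : Finset Ω) (hR : R ⊆ A) :
    f R ≥ (1 - ν) * f (R.image π) := by
  have hinj : Set.InjOn π (R : Set Ω) := hbij.injOn.mono (coe_subset.mpr hR)
  exact hν ▸ one_sub_curvature_mul_image_le hsub hnorm (fun A B => hmono A B) hpos hinj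
    fun a ha => hval a (hR ha)

theorem stmt6 {Ω : Type*} [Fintype Ω] [DecidableEq Ω] [Nonempty Ω]
    (f : Finset Ω → ℝ)
    (hnorm : f ∅ = 0)
    (hmono : ∀ A B : Finset Ω, A ⊆ B → f A ≤ f B)
    (hsub : ∀ A B : Finset Ω, f A + f B ≥ f (A ∪ B) + f (A ∩ B))
    (hpos : ∀ x : Ω, 0 < f {x})
    (ν : ℝ)
    (hν : ν = 1 - (univ : Finset Ω).inf' univ_nonempty
      (fun x => (f univ - f (univ \ {x})) / f {x}))
    (M : Matroid Ω) (A Astar : Finset Ω)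
    (hA : M.IsBase (A : Set Ω)) (hAstar : M.IsBase (Astar : Set Ω))
    (π : Ω → Ω)
    (hbij : Set.BijOn π (A : Set Ω) (Astar : Set Ω))
    (hfix : ∀ a ∈ A ∩ Astar, π a = a)
    (hval : ∀ a ∈ A, f {a} ≥ f {π a})
    (R : Finset Ω) (hR : R ⊆ A) :
    f R ≥ (1 - ν) * f (R.image π) :=
  stmt6_general f hnorm hmono hsub hpos ν hν A Astar π hbij hval R hR
end
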